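/- Let V be an unregularized vector field with moving frame Φ and operator family P, and let w ∈ C⁰(I_T,H_1) ∩ C¹(I_T,H_0) be a solution of ∂_s w = V(w) with ‖w‖_{C⁰(I_T,H_1) ∩ C¹(I_T,H_0)} ≤ κ. Put ξ(s) := Φ(w(s)) ∂_s w(s) = Φ(w(s)) V(w(s)) ∈ C⁰(I_T,H_0). Then for every 0 < T' < T one has ξ ∈ C¹(I_{T'}, H_{−1}) and ∂_s ξ = DΦ(w)(Φ(w)⁻¹ξ, Φ(w)⁻¹ξ) + P(w)ξ + Fξ. -/

import Mathlib

open MeasureTheory Set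

namespace NLGF

variable {X : Type*} [AddCommGroup X] [Module ℝ X]

/-- A *moving frame* on the scale `(Mem, nrm)` (where `Mem k`/`nrm k` are membership in and
norm of the `k`-th level `H_k` of the scale): a family of isomorphisms `Φ(x) : H_0 → H_0`,
`x ∈ H_1`, together with derivatives `DΦ(x) : H_0 × H_0 → H_0`, satisfying the
properties (Φ1)–(Φ6) of Albers–Frauenfelder–Schlenk. -/
structure MovingFrame (Mem : ℤ → X → Prop) (nrm : ℤ → X → ℝ) : Type _ where
  Φ : X → X → X
  Φinv : X → X → X
  DΦ : X → X → X → X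
  -- `Φ x`, `Φinv x` are linear on `H_0`, `DΦ x` is bilinear on `H_0 × H_0`
  add_Φ : ∀ x v w, Mem 1 x → Mem 0 v → Mem 0 w → Φ x (v + w) = Φ x v + Φ x w
  smul_Φ : ∀ x (a : ℝ) v, Mem 1 x → Mem 0 v → Φ x (a • v) = a • Φ x v
  add_Φinv : ∀ x v w, Mem 1 x → Mem 0 v → Mem 0 w → Φinv x (v + w) = Φinv x v + Φinv x w
  smul_Φinv : ∀ x (a : ℝ) v, Mem 1 x → Mem 0 v → Φinv x (a • v) = a • Φinv x v
  add_DΦ_right : ∀ x h v w, Mem 1 x → Mem 0 h → Mem 0 v → Mem 0 w →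
    DΦ x h (v + w) = DΦ x h v + DΦ x h w
  smul_DΦ_right : ∀ x h (a : ℝ) v, Mem 1 x → Mem 0 h → Mem 0 v →
    DΦ x h (a • v) = a • DΦ x h v
  add_DΦ_left : ∀ x h g v, Mem 1 x → Mem 0 h → Mem 0 g → Mem 0 v →
    DΦ x (h + g) v = DΦ x h v + DΦ x g v
  smul_DΦ_left : ∀ x (a : ℝ) h v, Mem 1 x → Mem 0 h → Mem 0 v →
    DΦ x (a • h) v = a • DΦ x h v
  mem_Φ : ∀ x v, Mem 1 x → Mem 0 v → Mem 0 (Φ x v)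
  mem_Φinv : ∀ x v, Mem 1 x → Mem 0 v → Mem 0 (Φinv x v)
  mem_DΦ : ∀ x h v, Mem 1 x → Mem 0 h → Mem 0 v → Mem 0 (DΦ x h v)
  -- (Φ1): `Φ(x) : H_0 → H_0` is an isomorphism
  Φ_left_inv : ∀ x v, Mem 1 x → Mem 0 v → Φinv x (Φ x v) = v
  Φ_right_inv : ∀ x v, Mem 1 x → Mem 0 v → Φ x (Φinv x v) = v
  bounded_Φ : ∀ x, Mem 1 x → ∃ C > 0, ∀ v, Mem 0 v →
    nrm 0 (Φ x v) ≤ C * nrm 0 v ∧ nrm 0 (Φinv x v) ≤ C * nrm 0 v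
  bounded_DΦ : ∀ x, Mem 1 x → ∃ C > 0, ∀ h v, Mem 0 h → Mem 0 v →
    nrm 0 (DΦ x h v) ≤ C * (nrm 0 h * nrm 0 v)
  -- (Φ2): `(x,v) ↦ Φ(x)v` is continuous `H_1 × H_0 → H_0`
  cont_Φ : ∀ x v, Mem 1 x → Mem 0 v → ∀ ε > 0, ∃ δ > 0, ∀ x' v', Mem 1 x' → Mem 0 v' →
    nrm 1 (x' - x) < δ → nrm 0 (v' - v) < δ → nrm 0 (Φ x' v' - Φ x v) < ε
  -- (Φ3): `DΦ(x)` is the derivative of `x ↦ Φ(x)v`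
  hasDeriv_Φ : ∀ x v, Mem 1 x → Mem 0 v → ∀ ε > 0, ∃ δ > 0, ∀ h, Mem 1 h → nrm 1 h < δ →
    nrm 0 (Φ (x + h) v - Φ x v - DΦ x h v) ≤ ε * nrm 1 h
  -- (Φ4): `(x,h,v) ↦ DΦ(x)(h,v)` is continuous `H_1 × H_0 × H_0 → H_0`
  cont_DΦ : ∀ x h v, Mem 1 x → Mem 0 h → Mem 0 v → ∀ ε > 0, ∃ δ > 0,
    ∀ x' h' v', Mem 1 x' → Mem 0 h' → Mem 0 v' →
      nrm 1 (x' - x) < δ → nrm 0 (h' - h) < δ → nrm 0 (v' - v) < δ →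
      nrm 0 (DΦ x' h' v' - DΦ x h v) < ε
  -- (Φ5): `Φ(x)` restricts to an isomorphism of `H_1`, continuously in `(x,v) ∈ H_1 × H_1`
  mem_Φ_one : ∀ x v, Mem 1 x → Mem 1 v → Mem 1 (Φ x v)
  mem_Φinv_one : ∀ x v, Mem 1 x → Mem 1 v → Mem 1 (Φinv x v)
  cont_Φ_one : ∀ x v, Mem 1 x → Mem 1 v → ∀ ε > 0, ∃ δ > 0, ∀ x' v', Mem 1 x' → Mem 1 v' →
    nrm 1 (x' - x) < δ → nrm 1 (v' - v) < δ →
    nrm 1 (Φ x' v' - Φ x v) < ε ∧ nrm 1 (Φinv x' v' - Φinv x v) < ε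
  -- (Φ6): uniform bounds on balls of `H_1`
  uniform_bound : ∀ κ > 0, ∃ c0 > 0, ∀ x, Mem 1 x → nrm 1 x ≤ κ →
    (∀ v, Mem 0 v → nrm 0 (Φ x v) ≤ c0 * nrm 0 v ∧ nrm 0 (Φinv x v) ≤ c0 * nrm 0 v) ∧
    (∀ v, Mem 1 v → nrm 1 (Φ x v) ≤ c0 * nrm 1 v ∧ nrm 1 (Φinv x v) ≤ c0 * nrm 1 v) ∧
    (∀ h v, Mem 0 h → Mem 0 v → nrm 0 (DΦ x h v) ≤ c0 * (nrm 0 h * nrm 0 v))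

/-- An *unregularized vector field* on the scale `(Mem, nrm)` with fundamental operator `F`:
a map `V ∈ C⁰(H_1,H_0) ∩ C⁰(H_2,H_1)`, differentiable as a map `H_1 → H_0`, satisfying
properties (V1)–(V3) of Albers–Frauenfelder–Schlenk with respect to a moving frame `Φ`. -/
structure UVF (Mem : ℤ → X → Prop) (nrm : ℤ → X → ℝ) (F : X → X) : Type _ where
  V : X → X
  DV : X → X → X
  frame : MovingFrame Mem nrm
  P : X → X → X
  -- `V ∈ C⁰(H_1,H_0) ∩ C⁰(H_2,H_1)`
  mem_V_one : ∀ x, Mem 1 x → Mem 0 (V x)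
  mem_V_two : ∀ x, Mem 2 x → Mem 1 (V x)
  cont_V_one : ∀ x, Mem 1 x → ∀ ε > 0, ∃ δ > 0, ∀ x', Mem 1 x' →
    nrm 1 (x' - x) < δ → nrm 0 (V x' - V x) < ε
  cont_V_two : ∀ x, Mem 2 x → ∀ ε > 0, ∃ δ > 0, ∀ x', Mem 2 x' →
    nrm 2 (x' - x) < δ → nrm 1 (V x' - V x) < ε
  -- `V : H_1 → H_0` is differentiable with differential `DV(x) : H_1 → H_0`
  add_DV : ∀ x h g, Mem 1 x → Mem 1 h → Mem 1 g → DV x (h + g) = DV x h + DV x g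
  smul_DV : ∀ x (a : ℝ) h, Mem 1 x → Mem 1 h → DV x (a • h) = a • DV x h
  mem_DV : ∀ x h, Mem 1 x → Mem 1 h → Mem 0 (DV x h)
  hasDeriv_V : ∀ x, Mem 1 x → ∀ ε > 0, ∃ δ > 0, ∀ h, Mem 1 h → nrm 1 h < δ →
    nrm 0 (V (x + h) - V x - DV x h) ≤ ε * nrm 1 h
  -- (V1): `(x,x̂) ↦ DV(x)x̂` is continuous `H_1 × H_1 → H_0`
  cont_DV : ∀ x h, Mem 1 x → Mem 1 h → ∀ ε > 0, ∃ δ > 0, ∀ x' h', Mem 1 x' → Mem 1 h' →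
    nrm 1 (x' - x) < δ → nrm 1 (h' - h) < δ → nrm 0 (DV x' h' - DV x h) < ε
  -- (V2): `Φ(x) DV(x) Φ(x)⁻¹ - F : H_1 → H_0` extends to a continuous linear
  -- operator `P(x) : H_0 → H_0`, with `(x,x̂) ↦ P(x)x̂` continuous `H_1 × H_0 → H_0`
  add_P : ∀ x v w, Mem 1 x → Mem 0 v → Mem 0 w → P x (v + w) = P x v + P x w
  smul_P : ∀ x (a : ℝ) v, Mem 1 x → Mem 0 v → P x (a • v) = a • P x v
  mem_P : ∀ x v, Mem 1 x → Mem 0 v → Mem 0 (P x v)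
  bounded_P : ∀ x, Mem 1 x → ∃ C > 0, ∀ v, Mem 0 v → nrm 0 (P x v) ≤ C * nrm 0 v
  extends_P : ∀ x h, Mem 1 x → Mem 1 h → P x h = frame.Φ x (DV x (frame.Φinv x h)) - F h
  cont_P : ∀ x v, Mem 1 x → Mem 0 v → ∀ ε > 0, ∃ δ > 0, ∀ x' v', Mem 1 x' → Mem 0 v' →
    nrm 1 (x' - x) < δ → nrm 0 (v' - v) < δ → nrm 0 (P x' v' - P x v) < ε
  -- (V3): bounds on balls of `H_1`
  bound_V3 : ∀ κ > 0, ∃ c1 > 0,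
    (∀ x, Mem 1 x → nrm 1 x ≤ κ → ∀ v, Mem 0 v → nrm 0 (P x v) ≤ c1 * nrm 0 v) ∧
    (∀ x, Mem 2 x → nrm 1 x ≤ κ → nrm 2 x ≤ c1 * (nrm 1 (V x) + 1))

/-- An unregularized vector field is *elementary with constant `c`* if its moving frame is
the identity and (V3') holds with the uniform constant `c`. -/
def UVF.ElementaryWith {Mem : ℤ → X → Prop} {nrm : ℤ → X → ℝ} {F : X → X}
    (W : UVF Mem nrm F) (c : ℝ) : Prop :=
  (∀ x v, W.frame.Φ x v = v) ∧ (∀ x v, W.frame.Φinv x v = v) ∧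
  (∀ x h v, W.frame.DΦ x h v = 0) ∧ 0 < c ∧
  (∀ x, Mem 1 x →
    (∀ v, Mem 0 v → nrm 0 (W.P x v) ≤ c * nrm 0 v) ∧ nrm 1 x ≤ c * (nrm 0 (W.V x) + 1)) ∧
  (∀ x, Mem 2 x → nrm 2 x ≤ c * (nrm 1 (W.V x) + nrm 1 x + 1))

/-- An *elementary* unregularized vector field: the moving frame in (V2) can be chosen to be
the identity, and the strengthened uniform bound (V3') holds. -/
def UVF.Elementary {Mem : ℤ → X → Prop} {nrm : ℤ → X → ℝ} {F : X → X}
    (W : UVF Mem nrm F) : Prop :=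
  ∃ c : ℝ, W.ElementaryWith c

/-- `w ∈ C⁰(I, H_k)` : the curve `w` takes values in `H_k` and is continuous on `I`
with respect to the `H_k`-norm. -/
def ContCurveOn (Mem : ℤ → X → Prop) (nrm : ℤ → X → ℝ) (k : ℤ) (I : Set ℝ) (w : ℝ → X) :
    Prop :=
  (∀ s ∈ I, Mem k (w s)) ∧
  ∀ s ∈ I, ∀ ε > 0, ∃ δ > 0, ∀ s' ∈ I, |s' - s| < δ → nrm k (w s' - w s) < ε

/-- The curve `w` is differentiable on `I` in the `H_k`-norm, with derivative `dw`. -/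
def HasDerivCurveOn (nrm : ℤ → X → ℝ) (k : ℤ) (I : Set ℝ) (w dw : ℝ → X) : Prop :=
  ∀ s ∈ I, ∀ ε > 0, ∃ δ > 0, ∀ s' ∈ I, s' ≠ s → |s' - s| < δ →
    nrm k ((s' - s)⁻¹ • (w s' - w s) - dw s) < ε

/-- `w ∈ C⁰(I_T, H_1) ∩ C¹(I_T, H_0)` is a solution of the unregularized gradient flow
equation `∂ₛ w = V(w)` on `I_T = (-T,T)`. -/
def IsGradSol (Mem : ℤ → X → Prop) (nrm : ℤ → X → ℝ) (Vf : X → X) (T : ℝ) (w : ℝ → X) :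
    Prop :=
  ContCurveOn Mem nrm 1 (Ioo (-T) T) w ∧
  HasDerivCurveOn nrm 0 (Ioo (-T) T) w (fun s => Vf (w s)) ∧
  ContCurveOn Mem nrm 0 (Ioo (-T) T) (fun s => Vf (w s))

end NLGF

open scoped ENNReal

namespace NLGF

/-- `f : ℕ → (0,∞)` is monotone increasing and unbounded. -/
def GoodWeight (f : ℕ → ℝ) : Prop :=
  (∀ ν, 0 < f ν) ∧ Monotone f ∧ ∀ c : ℝ, ∃ ν, c < f ν

/-- `ζ : ℕ → {±1}`. -/
def Signs (ζ : ℕ → ℝ) : Prop := ∀ ν, ζ ν = 1 ∨ ζ ν = -1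

/-- Membership in `H_k = ℓ²_{f^k}` : `∑ f(ν)^k x_ν² < ∞`. -/
def sMem (f : ℕ → ℝ) (k : ℤ) (x : ℕ → ℝ) : Prop :=
  Summable fun ν => f ν ^ k * x ν ^ 2

/-- The norm of `H_k = ℓ²_{f^k}`. -/
noncomputable def snrm (f : ℕ → ℝ) (k : ℤ) (x : ℕ → ℝ) : ℝ :=
  Real.sqrt (∑' ν, f ν ^ k * x ν ^ 2)

/-- The fundamental operator `(F x)_ν = ζ(ν) √(f(ν)) x_ν`, an isometry `H_{k+1} → H_k`. -/
noncomputable def sF (f ζ : ℕ → ℝ) (x : ℕ → ℝ) : ℕ → ℝ :=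
  fun ν => ζ ν * Real.sqrt (f ν) * x ν

/-- The squared `L²(I, H_k)`-norm of a curve `u`, as an extended real. -/
noncomputable def eL2 (f : ℕ → ℝ) (k : ℤ) (I : Set ℝ) (u : ℝ → ℕ → ℝ) : ℝ≥0∞ :=
  ∫⁻ s in I, ENNReal.ofReal ((snrm f k (u s)) ^ 2)

/-- `g` is a weak derivative of `u` on the interval `I` (componentwise, against smooth
compactly supported test functions). -/
def WeakDerivOn (I : Set ℝ) (u g : ℝ → ℕ → ℝ) : Prop :=
  ∀ (ν : ℕ) (φ : ℝ → ℝ), ContDiff ℝ (⊤ : ℕ∞) φ → HasCompactSupport φ → tsupport φ ⊆ I →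
    ∫ s in I, u s ν * deriv φ s = - ∫ s in I, g s ν * φ s

end NLGF

/-!
Write `ΦV x = Φ(x) V(x)`, so that `ξ = ΦV ∘ w`. For `h ∈ H_1` the derivative of `ΦV` is
`DΦ(x)(h, V x) + Φ(x) DV(x) h = DΦ(x)(h, V x) + P(x) Φ(x) h + F Φ(x) h` by (V2), and the right
hand side `DΦV x h` makes sense, and is jointly continuous, for `(x, h) ∈ H_1 × H_0` with values
in `H_{-1}`. As `w` is differentiable only into `H_0`, the chain rule is replaced by the mean
value inequality in `H_{-1} ≅ ℓ²` along the segment from `w s` to `w s'`: the difference quotient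
of `ξ` lies within `sup_t ‖DΦV (w s + t (w s' - w s)) q - DΦV (w s) (V (w s))‖_{-1}` of
`DΦV (w s) (V (w s)) = η s`, where `q = (w s' - w s) / (s' - s) → V (w s)` in `H_0`, and joint
continuity makes this supremum small.
-/

open Filter Topology Asymptotics

namespace NLGF

section Curves

variable {X : Type*} [AddCommGroup X] {Mem : ℤ → X → Prop} {nrm : ℤ → X → ℝ}
  {k : ℤ} {I J : Set ℝ} {w w' dw dw' : ℝ → X}

lemma ContCurveOn.mono (hw : ContCurveOn Mem nrm k I w) (hJ : J ⊆ I) :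
    ContCurveOn Mem nrm k J w :=
  ⟨fun s hs => hw.1 s (hJ hs), fun s hs ε hε => (hw.2 s (hJ hs) ε hε).imp
    fun _ ⟨hδ, h⟩ => ⟨hδ, fun s' hs' => h s' (hJ hs')⟩⟩

lemma ContCurveOn.congr (hw : ContCurveOn Mem nrm k I w) (h : EqOn w w' I) :
    ContCurveOn Mem nrm k I w' := by
  refine ⟨fun s hs => h hs ▸ hw.1 s hs, fun s hs ε hε => (hw.2 s hs ε hε).imp
    fun _ ⟨hδ, hw'⟩ => ⟨hδ, fun s' hs' hd => ?_⟩⟩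
  rw [← h hs, ← h hs']
  exact hw' s' hs' hd

lemma HasDerivCurveOn.mono [Module ℝ X] (hw : HasDerivCurveOn nrm k I w dw) (hJ : J ⊆ I) :
    HasDerivCurveOn nrm k J w dw := fun s hs ε hε => (hw s (hJ hs) ε hε).imp
  fun _ ⟨hδ, h⟩ => ⟨hδ, fun s' hs' => h s' (hJ hs')⟩

lemma HasDerivCurveOn.congr_deriv [Module ℝ X] (hw : HasDerivCurveOn nrm k I w dw)
    (h : EqOn dw dw' I) : HasDerivCurveOn nrm k I w dw' := fun s hs => by
  rw [← h hs]
  exact hw s hs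

end Curves

section Scale

variable {f ζ : ℕ → ℝ} {k : ℤ} {x y : ℕ → ℝ}

/-- `x ↦ (√(f ν ^ k) x_ν)_ν` is the isometry `H_k ≅ ℓ²`; off `H_k` we send `x` to `0`. -/
noncomputable def toLp (f : ℕ → ℝ) (k : ℤ) (x : ℕ → ℝ) : lp (fun _ : ℕ => ℝ) 2 :=
  open Classical in
  if h : Memℓp (fun ν => √(f ν ^ k) * x ν) 2 then ⟨_, h⟩ else 0

lemma sMem_iff_memℓp (hf : ∀ ν, 0 < f ν) :
    sMem f k x ↔ Memℓp (fun ν => √(f ν ^ k) * x ν) 2 := by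
  rw [memℓp_gen_iff (by norm_num), sMem]
  refine summable_congr fun ν => ?_
  rw [ENNReal.toReal_ofNat, Real.rpow_two, Real.norm_eq_abs, sq_abs, mul_pow,
    Real.sq_sqrt (zpow_pos (hf ν) k).le]

lemma sMem.add (hf : ∀ ν, 0 < f ν) (hx : sMem f k x) (hy : sMem f k y) :
    sMem f k (x + y) := by
  rw [sMem_iff_memℓp hf] at *
  convert hx.add hy using 1
  ext ν
  simp [mul_add]

lemma sMem.smul (hx : sMem f k x) (c : ℝ) : sMem f k (c • x) := by
  simpa [sMem, mul_pow, mul_left_comm] using hx.mul_left (c ^ 2)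

lemma sMem.sub (hf : ∀ ν, 0 < f ν) (hx : sMem f k x) (hy : sMem f k y) :
    sMem f k (x - y) := by
  simpa [sub_eq_add_neg] using hx.add hf (hy.smul (-1))

lemma coe_toLp (hf : ∀ ν, 0 < f ν) (hx : sMem f k x) :
    ⇑(toLp f k x) = fun ν => √(f ν ^ k) * x ν := by
  rw [toLp, dif_pos ((sMem_iff_memℓp hf).1 hx)]

lemma norm_toLp (hf : ∀ ν, 0 < f ν) (hx : sMem f k x) : ‖toLp f k x‖ = snrm f k x := by
  have h := lp.norm_rpow_eq_tsum (p := 2) (by norm_num) (toLp f k x)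
  rw [coe_toLp hf hx] at h
  simp only [ENNReal.toReal_ofNat, Real.rpow_two, Real.norm_eq_abs, sq_abs, mul_pow,
    Real.sq_sqrt (zpow_pos (hf _) k).le] at h
  rw [snrm, ← h, Real.sqrt_sq (norm_nonneg _)]

lemma toLp_add (hf : ∀ ν, 0 < f ν) (hx : sMem f k x) (hy : sMem f k y) :
    toLp f k (x + y) = toLp f k x + toLp f k y := by
  ext ν
  rw [lp.coeFn_add, Pi.add_apply, coe_toLp hf (hx.add hf hy), coe_toLp hf hx, coe_toLp hf hy]
  exact mul_add _ _ _

lemma toLp_smul (hf : ∀ ν, 0 < f ν) (hx : sMem f k x) (c : ℝ) :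
    toLp f k (c • x) = c • toLp f k x := by
  ext ν
  simp [coe_toLp hf (hx.smul c), coe_toLp hf hx, mul_left_comm]

lemma toLp_sub (hf : ∀ ν, 0 < f ν) (hx : sMem f k x) (hy : sMem f k y) :
    toLp f k (x - y) = toLp f k x - toLp f k y := by
  ext ν
  rw [lp.coeFn_sub, Pi.sub_apply, coe_toLp hf (hx.sub hf hy), coe_toLp hf hx, coe_toLp hf hy]
  exact mul_sub _ _ _

lemma snrm_nonneg (f : ℕ → ℝ) (k : ℤ) (x : ℕ → ℝ) : 0 ≤ snrm f k x := Real.sqrt_nonneg _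

lemma snrm_smul (c : ℝ) (x : ℕ → ℝ) : snrm f k (c • x) = |c| * snrm f k x := by
  simp only [snrm, Pi.smul_apply, smul_eq_mul, mul_pow, mul_left_comm _ (c ^ 2),
    tsum_mul_left, Real.sqrt_mul (sq_nonneg c), Real.sqrt_sq_eq_abs]

lemma snrm_add_le (hf : ∀ ν, 0 < f ν) (hx : sMem f k x) (hy : sMem f k y) :
    snrm f k (x + y) ≤ snrm f k x + snrm f k y := by
  simpa only [← norm_toLp hf, hx, hy, hx.add hf hy, toLp_add hf hx hy] using norm_add_le _ _

lemma weight_le_of_le {l : ℤ} (hf : ∀ ν, 0 < f ν) (hmono : Monotone f) (hlk : l ≤ k) (ν : ℕ) :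
    f ν ^ l * x ν ^ 2 ≤ f 0 ^ (l - k) * (f ν ^ k * x ν ^ 2) := by
  have hpow : f ν ^ (l - k) ≤ f 0 ^ (l - k) := by
    simpa only [zpow_neg, inv_inv] using inv_anti₀ (zpow_pos (hf 0) (-(l - k)))
      (zpow_le_zpow_left₀ (neg_nonneg.2 (sub_nonpos.2 hlk)) (hf 0).le (hmono (Nat.zero_le ν)))
  calc f ν ^ l * x ν ^ 2 = f ν ^ (l - k) * (f ν ^ k * x ν ^ 2) := by
        rw [← mul_assoc, ← zpow_add₀ (hf ν).ne', sub_add_cancel]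
    _ ≤ f 0 ^ (l - k) * (f ν ^ k * x ν ^ 2) :=
        mul_le_mul_of_nonneg_right hpow (mul_nonneg (zpow_pos (hf ν) k).le (sq_nonneg _))

lemma sMem.mono {l : ℤ} (hf : ∀ ν, 0 < f ν) (hmono : Monotone f) (hlk : l ≤ k)
    (hx : sMem f k x) : sMem f l x :=
  Summable.of_nonneg_of_le (fun ν => mul_nonneg (zpow_pos (hf ν) _).le (sq_nonneg _))
    (weight_le_of_le hf hmono hlk) (hx.mul_left _)

lemma snrm_le_of_le {l : ℤ} (hf : ∀ ν, 0 < f ν) (hmono : Monotone f) (hlk : l ≤ k)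
    (hx : sMem f k x) : snrm f l x ≤ √(f 0 ^ (l - k)) * snrm f k x := by
  rw [snrm, snrm, ← Real.sqrt_mul (zpow_pos (hf 0) _).le, ← tsum_mul_left]
  exact Real.sqrt_le_sqrt
    ((hx.mono hf hmono hlk).tsum_le_tsum (weight_le_of_le hf hmono hlk) (hx.mul_left _))

lemma weight_sF (hf : ∀ ν, 0 < f ν) (hζ : Signs ζ) (ν : ℕ) :
    f ν ^ k * sF f ζ x ν ^ 2 = f ν ^ (k + 1) * x ν ^ 2 := by
  have hζ2 : ζ ν ^ 2 = 1 := by rcases hζ ν with h | h <;> simp [h]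
  rw [sF, mul_pow, mul_pow, hζ2, Real.sq_sqrt (hf ν).le, zpow_add_one₀ (hf ν).ne']
  ring

lemma sMem_sF_iff (hf : ∀ ν, 0 < f ν) (hζ : Signs ζ) :
    sMem f k (sF f ζ x) ↔ sMem f (k + 1) x := by
  simp only [sMem, weight_sF hf hζ]

lemma snrm_sF (hf : ∀ ν, 0 < f ν) (hζ : Signs ζ) :
    snrm f k (sF f ζ x) = snrm f (k + 1) x := by
  simp only [snrm, weight_sF hf hζ]

lemma sF_sub : sF f ζ (x - y) = sF f ζ x - sF f ζ y := by
  ext ν; simp [sF, mul_sub]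

lemma sF_smul (c : ℝ) : sF f ζ (c • x) = c • sF f ζ x := by
  ext ν; simp [sF]; ring

lemma norm_toLp_sub_sub_smul (hf : ∀ ν, 0 < f ν) {z : ℕ → ℝ} (hx : sMem f k x)
    (hy : sMem f k y) (hz : sMem f k z) (c : ℝ) :
    ‖toLp f k x - toLp f k y - c • toLp f k z‖ = snrm f k (x - y - c • z) := by
  rw [← toLp_smul hf hz, ← toLp_sub hf hx hy, ← toLp_sub hf (hx.sub hf hy) (hz.smul c),
    norm_toLp hf ((hx.sub hf hy).sub hf (hz.smul c))]

end Scale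

section Convergence

variable {f ζ : ℕ → ℝ} {k : ℤ} {x y : ℕ → ℝ} {α : Type*} {l : Filter α}

noncomputable def nhdsIn (f : ℕ → ℝ) (k : ℤ) (x : ℕ → ℝ) : Filter (ℕ → ℝ) :=
  comap (fun y => snrm f k (y - x)) (𝓝 0) ⊓ 𝓟 {y | sMem f k y}

lemma tendsto_nhdsIn_iff {g : α → ℕ → ℝ} :
    Tendsto g l (nhdsIn f k x) ↔
      (∀ᶠ a in l, sMem f k (g a)) ∧ Tendsto (fun a => snrm f k (g a - x)) l (𝓝 0) := by
  rw [nhdsIn, tendsto_inf, tendsto_comap_iff, tendsto_principal, and_comm]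
  rfl

lemma nhdsIn_basis : (nhdsIn f k x).HasBasis (fun δ : ℝ => 0 < δ)
    (fun δ => {y | sMem f k y ∧ snrm f k (y - x) < δ}) := by
  refine ((Metric.nhds_basis_ball.comap _).inf_principal _).congr (fun _ => Iff.rfl) ?_
  intro δ _
  ext y
  simp [abs_of_nonneg (snrm_nonneg _ _ _), and_comm]

lemma tendsto_nhdsIn_add (hf : ∀ ν, 0 < f ν) (hx : sMem f k x) (hy : sMem f k y)
    {g g' : α → ℕ → ℝ} (hg : Tendsto g l (nhdsIn f k x)) (hg' : Tendsto g' l (nhdsIn f k y)) :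
    Tendsto (fun a => g a + g' a) l (nhdsIn f k (x + y)) := by
  rw [tendsto_nhdsIn_iff] at *
  have hmem := hg.1.and hg'.1
  refine ⟨hmem.mono fun a h => h.1.add hf h.2, squeeze_zero' (.of_forall fun _ => snrm_nonneg _ _ _)
    (hmem.mono fun a h => ?_) (by simpa using hg.2.add hg'.2)⟩
  rw [add_sub_add_comm]
  exact snrm_add_le hf (h.1.sub hf hx) (h.2.sub hf hy)

lemma nhdsIn_le_of_le {l : ℤ} (hf : ∀ ν, 0 < f ν) (hmono : Monotone f) (hlk : l ≤ k)
    (hx : sMem f k x) : nhdsIn f k x ≤ nhdsIn f l x := by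
  have hid := tendsto_nhdsIn_iff.1 (tendsto_id (x := nhdsIn f k x))
  refine tendsto_nhdsIn_iff.2 ⟨hid.1.mono fun y hy => hy.mono hf hmono hlk, ?_⟩
  refine squeeze_zero' (.of_forall fun _ => snrm_nonneg _ _ _) (hid.1.mono fun y hy => ?_)
    (by simpa using hid.2.const_mul √(f 0 ^ (l - k)))
  exact snrm_le_of_le hf hmono hlk (hy.sub hf hx)

lemma tendsto_sF_nhdsIn (hf : ∀ ν, 0 < f ν) (hζ : Signs ζ) :
    Tendsto (sF f ζ) (nhdsIn f (k + 1) x) (nhdsIn f k (sF f ζ x)) := by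
  have hid := tendsto_nhdsIn_iff.1 (tendsto_id (x := nhdsIn f (k + 1) x))
  refine tendsto_nhdsIn_iff.2 ⟨hid.1.mono fun y hy => (sMem_sF_iff hf hζ).2 hy, ?_⟩
  simpa only [← sF_sub, snrm_sF hf hζ, id] using hid.2

lemma tendsto_const_nhdsIn (hx : sMem f k x) : Tendsto (fun _ => x) l (nhdsIn f k x) :=
  tendsto_nhdsIn_iff.2 ⟨.of_forall fun _ => hx, by simpa [snrm] using tendsto_const_nhds⟩

lemma tendsto_snrm_smul (x : ℕ → ℝ) : Tendsto (fun τ : ℝ => snrm f k (τ • x)) (𝓝 0) (𝓝 0) := by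
  simpa [snrm_smul] using (continuous_abs.tendsto (0 : ℝ)).mul_const (snrm f k x)

lemma tendsto_add_smul_nhdsIn (hf : ∀ ν, 0 < f ν) (hx : sMem f k x) (hy : sMem f k y) :
    Tendsto (fun τ : ℝ => x + τ • y) (𝓝 0) (nhdsIn f k x) :=
  tendsto_nhdsIn_iff.2 ⟨.of_forall fun τ => hx.add hf (hy.smul τ),
    by simpa using tendsto_snrm_smul y⟩

lemma tendsto_segment_nhdsIn (hf : ∀ ν, 0 < f ν) (hx : sMem f k x) {g : α → ℕ → ℝ}
    (hg : Tendsto g l (nhdsIn f k x)) :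
    Tendsto (fun p : α × ℝ => x + p.2 • (g p.1 - x)) (l ×ˢ 𝓟 (Icc 0 1)) (nhdsIn f k x) := by
  rw [tendsto_nhdsIn_iff] at hg ⊢
  have hev : ∀ᶠ p in l ×ˢ 𝓟 (Icc (0 : ℝ) 1), sMem f k (g p.1) ∧ p.2 ∈ Icc 0 1 :=
    (hg.1.prod_inl _).and ((eventually_principal.2 fun _ ht => ht).prod_inr l)
  refine ⟨hev.mono fun p h => hx.add hf ((h.1.sub hf hx).smul _), squeeze_zero'
    (.of_forall fun _ => snrm_nonneg _ _ _) (hev.mono fun p h => ?_) (hg.2.comp tendsto_fst)⟩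
  rw [add_sub_cancel_left, snrm_smul, abs_of_nonneg h.2.1]
  exact mul_le_of_le_one_left (snrm_nonneg _ _ _) h.2.2

lemma isLittleO_remainder_smul {R : (ℕ → ℝ) → ℕ → ℝ}
    (hR : ∀ ε > 0, ∃ δ > 0, ∀ h, sMem f 1 h → snrm f 1 h < δ → snrm f 0 (R h) ≤ ε * snrm f 1 h)
    (hx : sMem f 1 x) : (fun τ : ℝ => snrm f 0 (R (τ • x))) =o[𝓝 0] id := by
  have hx0 := snrm_nonneg f 1 x
  refine IsLittleO.of_bound fun c hc => ?_
  obtain ⟨δ, hδ, hRδ⟩ := hR (c / (snrm f 1 x + 1)) (by positivity)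
  filter_upwards [(tendsto_snrm_smul x).eventually (gt_mem_nhds hδ)] with τ hτ
  have hx1 : snrm f 1 x / (snrm f 1 x + 1) ≤ 1 :=
    div_le_one_of_le₀ (le_add_of_nonneg_right zero_le_one) (by positivity)
  calc ‖snrm f 0 (R (τ • x))‖ ≤ c / (snrm f 1 x + 1) * snrm f 1 (τ • x) := by
        rw [Real.norm_of_nonneg (snrm_nonneg _ _ _)]
        exact hRδ _ (hx.smul τ) hτ
    _ = c * ‖id τ‖ * (snrm f 1 x / (snrm f 1 x + 1)) := by
        rw [snrm_smul, id, Real.norm_eq_abs]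
        ring
    _ ≤ c * ‖id τ‖ := mul_le_of_le_one_right (by positivity) hx1

lemma isLittleO_snrm_smul {z : ℝ → ℕ → ℝ}
    (hz : Tendsto (fun τ => snrm f k (z τ)) (𝓝 0) (𝓝 0)) :
    (fun τ : ℝ => snrm f k (τ • z τ)) =o[𝓝 0] id := by
  refine IsLittleO.of_bound fun c hc => ?_
  filter_upwards [hz.eventually (gt_mem_nhds hc)] with τ hτ
  rw [Real.norm_of_nonneg (snrm_nonneg _ _ _), snrm_smul, id, Real.norm_eq_abs, mul_comm]
  exact mul_le_mul_of_nonneg_right hτ.le (abs_nonneg τ)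

lemma contCurveOn_iff {I : Set ℝ} {w : ℝ → ℕ → ℝ} :
    ContCurveOn (sMem f) (snrm f) k I w ↔ ∀ s ∈ I, Tendsto w (𝓝[I] s) (nhdsIn f k (w s)) := by
  simp only [Metric.nhdsWithin_basis_ball.tendsto_iff nhdsIn_basis]
  constructor
  · rintro ⟨hmem, hcont⟩ s hs ε hε
    obtain ⟨δ, hδ, h⟩ := hcont s hs ε hε
    exact ⟨δ, hδ, fun s' ⟨hd, hs'⟩ => ⟨hmem s' hs', h s' hs' hd⟩⟩
  · intro h
    refine ⟨fun s hs => ?_, fun s hs ε hε => ?_⟩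
    · obtain ⟨δ, hδ, hball⟩ := h s hs 1 one_pos
      exact (hball s ⟨by simpa using hδ, hs⟩).1
    · obtain ⟨δ, hδ, hball⟩ := h s hs ε hε
      exact ⟨δ, hδ, fun s' hs' hd => (hball s' ⟨hd, hs'⟩).2⟩

lemma hasDerivCurveOn_iff {I : Set ℝ} {w dw : ℝ → ℕ → ℝ} :
    HasDerivCurveOn (snrm f) k I w dw ↔ ∀ s ∈ I,
      Tendsto (fun s' => snrm f k ((s' - s)⁻¹ • (w s' - w s) - dw s)) (𝓝[I \ {s}] s) (𝓝 0) := by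
  refine forall₂_congr fun s _ => ?_
  simp only [Metric.tendsto_nhdsWithin_nhds, Real.dist_eq, sub_zero,
    abs_of_nonneg (snrm_nonneg _ _ _), Set.mem_sdiff, mem_singleton_iff, and_imp]

lemma ContCurveOn.of_le {l : ℤ} {I : Set ℝ} {w : ℝ → ℕ → ℝ} (hf : ∀ ν, 0 < f ν)
    (hmono : Monotone f) (hw : ContCurveOn (sMem f) (snrm f) k I w) (hlk : l ≤ k) :
    ContCurveOn (sMem f) (snrm f) l I w :=
  contCurveOn_iff.2 fun s hs =>
    (contCurveOn_iff.1 hw s hs).mono_right (nhdsIn_le_of_le hf hmono hlk (hw.1 s hs))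

end Convergence

namespace UVF

variable {X : Type*} [AddCommGroup X] [Module ℝ X] {Mem : ℤ → X → Prop} {nrm : ℤ → X → ℝ}
  {F : X → X} (W : UVF Mem nrm F)

def ΦV (x : X) : X := W.frame.Φ x (W.V x)

def DΦV (x v : X) : X :=
  W.frame.DΦ x v (W.V x) + W.P x (W.frame.Φ x v) + F (W.frame.Φ x v)

lemma DΦV_eq {x h : X} (hx : Mem 1 x) (hh1 : Mem 1 h) (hh0 : Mem 0 h) :
    W.DΦV x h = W.frame.DΦ x h (W.V x) + W.frame.Φ x (W.DV x h) := by
  rw [DΦV, W.extends_P x _ hx (W.frame.mem_Φ_one x h hx hh1), W.frame.Φ_left_inv x h hx hh0]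
  abel

end UVF

section Frame

variable {f ζ : ℕ → ℝ} {x h v : ℕ → ℝ}

lemma MovingFrame.tendsto_Φ (M : MovingFrame (sMem f) (snrm f)) (hx : sMem f 1 x)
    (hv : sMem f 0 v) :
    Tendsto (fun p : (ℕ → ℝ) × (ℕ → ℝ) => M.Φ p.1 p.2) (nhdsIn f 1 x ×ˢ nhdsIn f 0 v)
      (nhdsIn f 0 (M.Φ x v)) := by
  rw [(nhdsIn_basis.prod nhdsIn_basis).tendsto_iff nhdsIn_basis]
  intro ε hε
  obtain ⟨δ, hδ, hΦ⟩ := M.cont_Φ x v hx hv ε hε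
  exact ⟨(δ, δ), ⟨hδ, hδ⟩, fun p ⟨⟨hp₁, hd₁⟩, hp₂, hd₂⟩ =>
    ⟨M.mem_Φ _ _ hp₁ hp₂, hΦ _ _ hp₁ hp₂ hd₁ hd₂⟩⟩

lemma MovingFrame.tendsto_DΦ (M : MovingFrame (sMem f) (snrm f)) (hx : sMem f 1 x)
    (hh : sMem f 0 h) (hv : sMem f 0 v) :
    Tendsto (fun p : (ℕ → ℝ) × (ℕ → ℝ) × (ℕ → ℝ) => M.DΦ p.1 p.2.1 p.2.2)
      (nhdsIn f 1 x ×ˢ (nhdsIn f 0 h ×ˢ nhdsIn f 0 v)) (nhdsIn f 0 (M.DΦ x h v)) := by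
  rw [(nhdsIn_basis.prod (nhdsIn_basis.prod nhdsIn_basis)).tendsto_iff nhdsIn_basis]
  intro ε hε
  obtain ⟨δ, hδ, hDΦ⟩ := M.cont_DΦ x h v hx hh hv ε hε
  exact ⟨(δ, δ, δ), ⟨hδ, hδ, hδ⟩, fun p ⟨⟨hp₁, hd₁⟩, ⟨hp₂, hd₂⟩, hp₃, hd₃⟩ =>
    ⟨M.mem_DΦ _ _ _ hp₁ hp₂ hp₃, hDΦ _ _ _ hp₁ hp₂ hp₃ hd₁ hd₂ hd₃⟩⟩

lemma MovingFrame.Φ_sub (M : MovingFrame (sMem f) (snrm f)) (hx : sMem f 1 x)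
    (hh : sMem f 0 h) (hv : sMem f 0 v) :
    M.Φ x (h - v) = M.Φ x h - M.Φ x v := by
  rw [sub_eq_add_neg, ← neg_one_smul ℝ v, M.add_Φ x h _ hx hh (hv.smul _), M.smul_Φ x _ v hx hv,
    neg_one_smul, ← sub_eq_add_neg]

lemma MovingFrame.isBigO_snrm_Φ_line (M : MovingFrame (sMem f) (snrm f)) (hf : ∀ ν, 0 < f ν)
    (hx : sMem f 1 x) (hh : sMem f 1 h) {R : ℝ → ℕ → ℝ} (hR : ∀ τ, sMem f 0 (R τ)) :
    (fun τ => snrm f 0 (M.Φ (x + τ • h) (R τ))) =O[𝓝 0] (fun τ => snrm f 0 (R τ)) := by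
  obtain ⟨c₀, -, hc₀⟩ := M.uniform_bound (snrm f 1 x + 1) (by linarith [snrm_nonneg f 1 x])
  refine IsBigO.of_bound c₀ ?_
  filter_upwards [(tendsto_snrm_smul h).eventually (gt_mem_nhds one_pos)] with τ hτ
  have hball : snrm f 1 (x + τ • h) ≤ snrm f 1 x + 1 :=
    (snrm_add_le hf hx (hh.smul τ)).trans (by linarith)
  simpa only [Real.norm_of_nonneg (snrm_nonneg _ _ _)] using
    ((hc₀ _ (hx.add hf (hh.smul τ)) hball).1 _ (hR τ)).1

namespace UVF

variable (W : UVF (sMem f) (snrm f) (sF f ζ))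

lemma tendsto_V (hx : sMem f 1 x) : Tendsto W.V (nhdsIn f 1 x) (nhdsIn f 0 (W.V x)) := by
  rw [nhdsIn_basis.tendsto_iff nhdsIn_basis]
  intro ε hε
  obtain ⟨δ, hδ, hV⟩ := W.cont_V_one x hx ε hε
  exact ⟨δ, hδ, fun y ⟨hy, hd⟩ => ⟨W.mem_V_one y hy, hV y hy hd⟩⟩

lemma tendsto_P (hx : sMem f 1 x) (hv : sMem f 0 v) :
    Tendsto (fun p : (ℕ → ℝ) × (ℕ → ℝ) => W.P p.1 p.2) (nhdsIn f 1 x ×ˢ nhdsIn f 0 v)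
      (nhdsIn f 0 (W.P x v)) := by
  rw [(nhdsIn_basis.prod nhdsIn_basis).tendsto_iff nhdsIn_basis]
  intro ε hε
  obtain ⟨δ, hδ, hP⟩ := W.cont_P x v hx hv ε hε
  exact ⟨(δ, δ), ⟨hδ, hδ⟩, fun p ⟨⟨hp₁, hd₁⟩, hp₂, hd₂⟩ =>
    ⟨W.mem_P _ _ hp₁ hp₂, hP _ _ hp₁ hp₂ hd₁ hd₂⟩⟩

lemma sMem_ΦV (hx : sMem f 1 x) : sMem f 0 (W.ΦV x) :=
  W.frame.mem_Φ _ _ hx (W.mem_V_one x hx)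

lemma sMem_DΦV (hf : ∀ ν, 0 < f ν) (hmono : Monotone f) (hζ : Signs ζ) (hx : sMem f 1 x)
    (hv : sMem f 0 v) : sMem f (-1) (W.DΦV x v) := by
  have hΦv := W.frame.mem_Φ x v hx hv
  refine ((W.frame.mem_DΦ _ _ _ hx hv (W.mem_V_one x hx)).add hf
    (W.mem_P _ _ hx hΦv)).mono hf hmono (by norm_num) |>.add hf ?_
  exact (sMem_sF_iff hf hζ).2 hΦv

lemma DΦV_smul (hx : sMem f 1 x) (hv : sMem f 0 v) (c : ℝ) :
    W.DΦV x (c • v) = c • W.DΦV x v := by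
  rw [DΦV, DΦV, W.frame.smul_Φ x c v hx hv, W.frame.smul_DΦ_left x c v _ hx hv (W.mem_V_one x hx),
    W.smul_P x c _ hx (W.frame.mem_Φ x v hx hv), sF_smul, smul_add, smul_add]

lemma sMem_DΦV_of_sMem_one (hf : ∀ ν, 0 < f ν) (hmono : Monotone f) (hx : sMem f 1 x)
    (hh : sMem f 1 h) : sMem f 0 (W.DΦV x h) := by
  rw [W.DΦV_eq hx hh (hh.mono hf hmono zero_le_one)]
  exact (W.frame.mem_DΦ _ _ _ hx (hh.mono hf hmono zero_le_one) (W.mem_V_one x hx)).add hf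
    (W.frame.mem_Φ _ _ hx (W.mem_DV x h hx hh))

lemma tendsto_ΦV (hx : sMem f 1 x) : Tendsto W.ΦV (nhdsIn f 1 x) (nhdsIn f 0 (W.ΦV x)) :=
  (W.frame.tendsto_Φ hx (W.mem_V_one x hx)).comp (tendsto_id.prodMk (W.tendsto_V hx))

lemma tendsto_DΦV (hf : ∀ ν, 0 < f ν) (hmono : Monotone f) (hζ : Signs ζ) (hx : sMem f 1 x)
    (hv : sMem f 0 v) :
    Tendsto (fun p : (ℕ → ℝ) × (ℕ → ℝ) => W.DΦV p.1 p.2) (nhdsIn f 1 x ×ˢ nhdsIn f 0 v)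
      (nhdsIn f (-1) (W.DΦV x v)) := by
  have hVx := W.mem_V_one x hx
  have hΦv := W.frame.mem_Φ x v hx hv
  have hDΦv := W.frame.mem_DΦ _ _ _ hx hv hVx
  have hPΦv := W.mem_P _ _ hx hΦv
  have hΦ := W.frame.tendsto_Φ hx hv
  have hDΦ := (W.frame.tendsto_DΦ hx hv hVx).comp
    (tendsto_fst.prodMk (tendsto_snd.prodMk ((W.tendsto_V hx).comp tendsto_fst)))
  have hP := (W.tendsto_P hx hΦv).comp (tendsto_fst.prodMk hΦ)
  have hF : Tendsto (fun p : (ℕ → ℝ) × (ℕ → ℝ) => sF f ζ (W.frame.Φ p.1 p.2))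
      (nhdsIn f 1 x ×ˢ nhdsIn f 0 v) (nhdsIn f (-1) (sF f ζ (W.frame.Φ x v))) := by
    have hsF := tendsto_sF_nhdsIn (k := -1) (x := W.frame.Φ x v) hf hζ
    norm_num at hsF
    exact hsF.comp hΦ
  have hsum := hDΦv.add hf hPΦv
  have hle : (-1 : ℤ) ≤ 0 := by norm_num
  exact (tendsto_nhdsIn_add hf (hsum.mono hf hmono hle) ((sMem_sF_iff hf hζ).2 hΦv)
    ((tendsto_nhdsIn_add hf hDΦv hPΦv hDΦ hP).mono_right (nhdsIn_le_of_le hf hmono hle hsum)) hF :)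

lemma ΦV_add_smul_sub_sub_eq (hf : ∀ ν, 0 < f ν) (hmono : Monotone f) {y : ℕ → ℝ}
    (hy : sMem f 1 y) (hh : sMem f 1 h) (τ : ℝ) :
    W.ΦV (y + τ • h) - W.ΦV y - τ • W.DΦV y h =
      (W.frame.Φ (y + τ • h) (W.V y) - W.frame.Φ y (W.V y) - W.frame.DΦ y (τ • h) (W.V y))
      + W.frame.Φ (y + τ • h) (W.V (y + τ • h) - W.V y - W.DV y (τ • h))
      + τ • (W.frame.Φ (y + τ • h) (W.DV y h) - W.frame.Φ y (W.DV y h)) := by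
  have hh0 := hh.mono hf hmono zero_le_one
  have hVy := W.mem_V_one y hy
  have hu := W.mem_DV y h hy hh
  have hline := hy.add hf (hh.smul τ)
  have hVline := W.mem_V_one _ hline
  rw [W.smul_DV y τ h hy hh, W.frame.Φ_sub hline (hVline.sub hf hVy) (hu.smul τ),
    W.frame.Φ_sub hline hVline hVy, W.frame.smul_Φ _ τ _ hline hu,
    W.frame.smul_DΦ_left y τ h _ hy hh0 hVy, W.DΦV_eq hy hh hh0, ΦV, ΦV]
  simp only [smul_add, smul_sub]
  abel

lemma isLittleO_ΦV_line (hf : ∀ ν, 0 < f ν) (hmono : Monotone f) {y : ℕ → ℝ}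
    (hy : sMem f 1 y) (hh : sMem f 1 h) :
    (fun τ : ℝ => snrm f 0 (W.ΦV (y + τ • h) - W.ΦV y - τ • W.DΦV y h)) =o[𝓝 0] id := by
  set M := W.frame
  have hh0 := hh.mono hf hmono zero_le_one
  have hVy := W.mem_V_one y hy
  have hu := W.mem_DV y h hy hh
  have hline : ∀ τ : ℝ, sMem f 1 (y + τ • h) := fun τ => hy.add hf (hh.smul τ)
  set A := fun τ : ℝ => M.Φ (y + τ • h) (W.V y) - M.Φ y (W.V y) - M.DΦ y (τ • h) (W.V y)
  set R := fun τ : ℝ => W.V (y + τ • h) - W.V y - W.DV y (τ • h)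
  set C := fun τ : ℝ => τ • (M.Φ (y + τ • h) (W.DV y h) - M.Φ y (W.DV y h))
  have hA : ∀ τ, sMem f 0 (A τ) := fun τ =>
    ((M.mem_Φ _ _ (hline τ) hVy).sub hf (M.mem_Φ _ _ hy hVy)).sub hf
      (M.mem_DΦ _ _ _ hy (hh0.smul τ) hVy)
  have hR : ∀ τ, sMem f 0 (R τ) := fun τ =>
    ((W.mem_V_one _ (hline τ)).sub hf hVy).sub hf (W.mem_DV _ _ hy (hh.smul τ))
  have hΦR : ∀ τ, sMem f 0 (M.Φ (y + τ • h) (R τ)) := fun τ => M.mem_Φ _ _ (hline τ) (hR τ)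
  have hC : ∀ τ, sMem f 0 (C τ) := fun τ =>
    ((M.mem_Φ _ _ (hline τ) hu).sub hf (M.mem_Φ _ _ hy hu)).smul τ
  have hoA : (fun τ => snrm f 0 (A τ)) =o[𝓝 0] id :=
    isLittleO_remainder_smul (M.hasDeriv_Φ y _ hy hVy) hh
  have hoΦR : (fun τ => snrm f 0 (M.Φ (y + τ • h) (R τ))) =o[𝓝 0] id :=
    (M.isBigO_snrm_Φ_line hf hy hh hR).trans_isLittleO
      (isLittleO_remainder_smul (W.hasDeriv_V y hy) hh)
  have hoC : (fun τ => snrm f 0 (C τ)) =o[𝓝 0] id :=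
    isLittleO_snrm_smul (tendsto_nhdsIn_iff.1 ((M.tendsto_Φ hy hu).comp
      ((tendsto_add_smul_nhdsIn hf hy hh).prodMk (tendsto_const_nhdsIn hu)))).2
  refine IsBigO.trans_isLittleO (IsBigO.of_bound 1 (.of_forall fun τ => ?_))
    ((hoA.add hoΦR).add hoC)
  rw [one_mul, W.ΦV_add_smul_sub_sub_eq hf hmono hy hh, Real.norm_of_nonneg (snrm_nonneg _ _ _),
    Real.norm_eq_abs]
  exact ((snrm_add_le hf ((hA τ).add hf (hΦR τ)) (hC τ)).trans
    (add_le_add_left (snrm_add_le hf (hA τ) (hΦR τ)) _)).trans (le_abs_self _)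

lemma hasDerivAt_toLp_ΦV_line (hf : ∀ ν, 0 < f ν) (hmono : Monotone f)
    (hx : sMem f 1 x) (hh : sMem f 1 h) (t : ℝ) :
    HasDerivAt (fun τ : ℝ => toLp f (-1) (W.ΦV (x + τ • h)))
      (toLp f (-1) (W.DΦV (x + t • h) h)) t := by
  have hline : ∀ τ : ℝ, sMem f 1 (x + τ • h) := fun τ => hx.add hf (hh.smul τ)
  have hle : (-1 : ℤ) ≤ 0 := by norm_num
  have hshift : ∀ τ : ℝ, x + τ • h = (x + t • h) + (τ - t) • h := fun τ => by
    rw [sub_smul]; abel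
  have hmem : ∀ τ : ℝ, sMem f 0 (W.ΦV (x + τ • h)) := fun τ => W.sMem_ΦV (hline τ)
  have hD := W.sMem_DΦV_of_sMem_one hf hmono (hline t) hh
  rw [hasDerivAt_iff_isLittleO, ← isLittleO_norm_left]
  refine IsBigO.trans_isLittleO (IsBigO.of_bound √(f 0 ^ (-1 - 0 : ℤ)) (.of_forall fun τ => ?_))
    ((W.isLittleO_ΦV_line hf hmono (hline t) hh).comp_tendsto
      (tendsto_sub_nhds_zero_iff.2 tendsto_id))
  rw [norm_norm, norm_toLp_sub_sub_smul hf ((hmem τ).mono hf hmono hle)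
    ((hmem t).mono hf hmono hle) (hD.mono hf hmono hle), Function.comp_apply,
    Real.norm_of_nonneg (snrm_nonneg _ _ _)]
  refine snrm_le_of_le hf hmono hle (((hmem τ).sub hf (hmem t)).sub hf (hD.smul _)) |>.trans_eq ?_
  rw [← hshift]

/-- Mean value inequality for `ΦV` along the segment `[x, y]`, in `H_{-1}`. -/
lemma snrm_smul_ΦV_sub_sub_le (hf : ∀ ν, 0 < f ν) (hmono : Monotone f) (hζ : Signs ζ)
    {y L : ℕ → ℝ} (hx : sMem f 1 x) (hy : sMem f 1 y) (hL : sMem f (-1) L) (c C : ℝ)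
    (hC : ∀ t ∈ Icc (0 : ℝ) 1, snrm f (-1) (W.DΦV (x + t • (y - x)) (c • (y - x)) - L) ≤ C) :
    snrm f (-1) (c • (W.ΦV y - W.ΦV x) - L) ≤ C := by
  have hh := hy.sub hf hx
  have hh0 := hh.mono hf hmono zero_le_one
  have hle : (-1 : ℤ) ≤ 0 := by norm_num
  have hline : ∀ t : ℝ, sMem f 1 (x + t • (y - x)) := fun t => hx.add hf (hh.smul t)
  have hD : ∀ t : ℝ, sMem f (-1) (W.DΦV (x + t • (y - x)) (y - x)) := fun t =>
    W.sMem_DΦV hf hmono hζ (hline t) hh0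
  set g := fun t : ℝ => c • toLp f (-1) (W.ΦV (x + t • (y - x))) - t • toLp f (-1) L
  have hderiv : ∀ t ∈ Icc (0 : ℝ) 1, HasDerivWithinAt g
      (c • toLp f (-1) (W.DΦV (x + t • (y - x)) (y - x)) - toLp f (-1) L) (Icc 0 1) t := by
    intro t _
    have hg := ((W.hasDerivAt_toLp_ΦV_line hf hmono hx hh t).const_smul c).sub
      ((hasDerivAt_id t).smul_const (toLp f (-1) L))
    rw [one_smul] at hg
    exact hg.hasDerivWithinAt
  have hbound : ∀ t ∈ Ico (0 : ℝ) 1,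
      ‖c • toLp f (-1) (W.DΦV (x + t • (y - x)) (y - x)) - toLp f (-1) L‖ ≤ C := by
    intro t ht
    rw [← toLp_smul hf (hD t), ← toLp_sub hf ((hD t).smul c) hL,
      norm_toLp hf (((hD t).smul c).sub hf hL), ← W.DΦV_smul (hline t) hh0]
    exact hC t (Ico_subset_Icc_self ht)
  have hmvt := norm_image_sub_le_of_norm_deriv_le_segment' hderiv hbound 1
    (right_mem_Icc.2 zero_le_one)
  have hΦV : ∀ z, sMem f 1 z → sMem f (-1) (W.ΦV z) := fun z hz =>
    (W.sMem_ΦV hz).mono hf hmono hle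
  have hg : g 1 - g 0 = toLp f (-1) (c • (W.ΦV y - W.ΦV x) - L) := by
    rw [toLp_sub hf (((hΦV y hy).sub hf (hΦV x hx)).smul c) hL, toLp_smul hf
      ((hΦV y hy).sub hf (hΦV x hx)), toLp_sub hf (hΦV y hy) (hΦV x hx)]
    simp only [g, one_smul, zero_smul, add_zero, add_sub_cancel, sub_zero, smul_sub]
    abel
  rwa [hg, norm_toLp hf ((((hΦV y hy).sub hf (hΦV x hx)).smul c).sub hf hL), sub_zero,
    mul_one] at hmvt

variable {I : Set ℝ} {w : ℝ → ℕ → ℝ}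

lemma contCurveOn_ΦV_comp (hw : ContCurveOn (sMem f) (snrm f) 1 I w) :
    ContCurveOn (sMem f) (snrm f) 0 I (fun s => W.ΦV (w s)) :=
  contCurveOn_iff.2 fun s hs => (W.tendsto_ΦV (hw.1 s hs)).comp (contCurveOn_iff.1 hw s hs)

lemma contCurveOn_DΦV_comp (hf : ∀ ν, 0 < f ν) (hmono : Monotone f) (hζ : Signs ζ)
    (hw : ContCurveOn (sMem f) (snrm f) 1 I w) :
    ContCurveOn (sMem f) (snrm f) (-1) I (fun s => W.DΦV (w s) (W.V (w s))) := by
  refine contCurveOn_iff.2 fun s hs => ?_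
  have hws := contCurveOn_iff.1 hw s hs
  exact (W.tendsto_DΦV hf hmono hζ (hw.1 s hs) (W.mem_V_one _ (hw.1 s hs))).comp
    (hws.prodMk ((W.tendsto_V (hw.1 s hs)).comp hws))

lemma hasDerivCurveOn_ΦV_comp (hf : ∀ ν, 0 < f ν) (hmono : Monotone f) (hζ : Signs ζ)
    (hw : ContCurveOn (sMem f) (snrm f) 1 I w)
    (hw' : HasDerivCurveOn (snrm f) 0 I w (fun s => W.V (w s))) :
    HasDerivCurveOn (snrm f) (-1) I (fun s => W.ΦV (w s))
      (fun s => W.DΦV (w s) (W.V (w s))) := by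
  refine hasDerivCurveOn_iff.2 fun s hs => ?_
  have hws := hw.1 s hs
  have hq : Tendsto (fun s' => (s' - s)⁻¹ • (w s' - w s)) (𝓝[I \ {s}] s)
      (nhdsIn f 0 (W.V (w s))) := by
    refine tendsto_nhdsIn_iff.2 ⟨?_, hasDerivCurveOn_iff.1 hw' s hs⟩
    filter_upwards [self_mem_nhdsWithin] with s' hs'
    exact (((hw.1 s' hs'.1).sub hf hws).mono hf hmono zero_le_one).smul _
  have hseg := tendsto_segment_nhdsIn hf hws
    ((contCurveOn_iff.1 hw s hs).mono_left (nhdsWithin_mono s sdiff_subset : 𝓝[I \ {s}] s ≤ _))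
  have hD := tendsto_nhdsIn_iff.1 ((W.tendsto_DΦV hf hmono hζ hws (W.mem_V_one _ hws)).comp
    (hseg.prodMk (hq.comp tendsto_fst)))
  rw [Metric.tendsto_nhds]
  intro ε hε
  filter_upwards [eventually_prod_principal_iff.1 (hD.2.eventually (gt_mem_nhds (half_pos hε))),
    self_mem_nhdsWithin] with s' hs't hs'
  rw [Real.dist_eq, sub_zero, abs_of_nonneg (snrm_nonneg _ _ _)]
  have hmvt := W.snrm_smul_ΦV_sub_sub_le hf hmono hζ hws (hw.1 s' hs'.1)
    (W.sMem_DΦV hf hmono hζ hws (W.mem_V_one _ hws)) (s' - s)⁻¹ (ε / 2)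
    fun t ht => (hs't t ht).le
  exact hmvt.trans_lt (half_lt_self hε)

end UVF

end Frame

theorem xi_C1_Hminus1_general
    (f ζ : ℕ → ℝ) (hf : GoodWeight f) (hζ : Signs ζ)
    (W : UVF (sMem f) (snrm f) (sF f ζ))
    (T : ℝ)
    (w : ℝ → ℕ → ℝ)
    (hsol : IsGradSol (sMem f) (snrm f) W.V T w)
    (T' : ℝ) (hT'T : T' < T)
    (ξ : ℝ → ℕ → ℝ) (hξ : ξ = fun s => W.frame.Φ (w s) (W.V (w s)))
    (η : ℝ → ℕ → ℝ)
    (hη : η = fun s =>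
      W.frame.DΦ (w s) (W.frame.Φinv (w s) (ξ s)) (W.frame.Φinv (w s) (ξ s)) +
        W.P (w s) (ξ s) + sF f ζ (ξ s)) :
    ContCurveOn (sMem f) (snrm f) (-1) (Ioo (-T') T') ξ ∧
    HasDerivCurveOn (snrm f) (-1) (Ioo (-T') T') ξ η ∧
    ContCurveOn (sMem f) (snrm f) (-1) (Ioo (-T') T') η := by
  obtain ⟨hpos, hmono, -⟩ := hf
  obtain ⟨hw, hw', -⟩ := hsol
  have hI : Ioo (-T') T' ⊆ Ioo (-T) T := Ioo_subset_Ioo (neg_le_neg hT'T.le) hT'T.le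
  have hη' : EqOn (fun s => W.DΦV (w s) (W.V (w s))) η (Ioo (-T) T) := by
    intro s hs
    rw [hη, hξ]
    beta_reduce
    rw [W.frame.Φ_left_inv _ _ (hw.1 s hs) (W.mem_V_one _ (hw.1 s hs))]
    rfl
  subst hξ
  exact ⟨((W.contCurveOn_ΦV_comp hw).of_le hpos hmono (by norm_num)).mono hI,
    ((W.hasDerivCurveOn_ΦV_comp hpos hmono hζ hw hw').congr_deriv hη').mono hI,
    ((W.contCurveOn_DΦV_comp hpos hmono hζ hw).congr hη').mono hI⟩

/-- **Claim 3.2.** Let `w` be a solution of `∂ₛ w = V(w)` bounded by `κ` in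
`C⁰(I_T,H_1) ∩ C¹(I_T,H_0)`, and let `ξ(s) = Φ(w(s)) ∂ₛw(s) = Φ(w(s)) V(w(s))`.
Then for every `0 < T' < T` one has `ξ ∈ C¹(I_{T'}, H_{-1})` and
`∂ₛ ξ = DΦ(w)(Φ(w)⁻¹ξ, Φ(w)⁻¹ξ) + P(w)ξ + F ξ`. -/
theorem xi_C1_Hminus1
    (f ζ : ℕ → ℝ) (hf : GoodWeight f) (hζ : Signs ζ)
    (W : UVF (sMem f) (snrm f) (sF f ζ))
    (T κ : ℝ) (hT : 0 < T)
    (w : ℝ → ℕ → ℝ)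
    (hsol : IsGradSol (sMem f) (snrm f) W.V T w)
    (hκ : ∀ s ∈ Ioo (-T) T,
      snrm f 1 (w s) ≤ κ ∧ snrm f 0 (w s) ≤ κ ∧ snrm f 0 (W.V (w s)) ≤ κ)
    (T' : ℝ) (hT' : 0 < T') (hT'T : T' < T)
    (ξ : ℝ → ℕ → ℝ) (hξ : ξ = fun s => W.frame.Φ (w s) (W.V (w s)))
    (η : ℝ → ℕ → ℝ)
    (hη : η = fun s =>
      W.frame.DΦ (w s) (W.frame.Φinv (w s) (ξ s)) (W.frame.Φinv (w s) (ξ s)) +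
        W.P (w s) (ξ s) + sF f ζ (ξ s)) :
    ContCurveOn (sMem f) (snrm f) (-1) (Ioo (-T') T') ξ ∧
    HasDerivCurveOn (snrm f) (-1) (Ioo (-T') T') ξ η ∧
    ContCurveOn (sMem f) (snrm f) (-1) (Ioo (-T') T') η :=
  xi_C1_Hminus1_general f ζ hf hζ W T w hsol T' hT'T ξ hξ η hη

end NLGF
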